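/- Let H₁, H₂ be nonzero complex Hilbert spaces and let T ∈ B(H₂, H₁) with ‖T‖ ≤ 1. The Hilbert T₂-module H₁ ⊕ H₂ given by π_{(H₁,H₂,T)} is a cogenerator for the category of Hilbert T₂-modules if and only if T is not injective and T ≠ 0. -/

import Mathlib

set_option synthInstance.maxHeartbeats 1000000
set_option maxHeartbeats 2000000

noncomputable section

open Filter

open scoped ENNReal Matrix.Norms.L2Operator

variable (A : Type) [NonUnitalNormedRing A] [NormedSpace ℂ A]

/-- A Hilbert `A`-module structure on the Hilbert space `K`: a contractive algebra
homomorphism `π : A → B(K)` which is nondegenerate, i.e. the linear span of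
`{π a x : a ∈ A, x ∈ K}` is dense in `K`. -/
def IsHilbertRep {K : Type} [NormedAddCommGroup K] [InnerProductSpace ℂ K] [CompleteSpace K]
    (π : A →ₙₐ[ℂ] (K →L[ℂ] K)) : Prop :=
  (∀ a : A, ‖π a‖ ≤ ‖a‖) ∧
  Dense ((Submodule.span ℂ {x : K | ∃ (a : A) (y : K), π a y = x} : Submodule ℂ K) : Set K)

/-- A bounded `A`-module map between Hilbert `A`-modules. -/
def IsModuleMap {K L : Type} [NormedAddCommGroup K] [InnerProductSpace ℂ K]
    [NormedAddCommGroup L] [InnerProductSpace ℂ L]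
    (πK : A →ₙₐ[ℂ] (K →L[ℂ] K)) (πL : A →ₙₐ[ℂ] (L →L[ℂ] L)) (T : K →L[ℂ] L) : Prop :=
  ∀ (a : A) (x : K), T (πK a x) = πL a (T x)

/-- `H` is a cogenerator for the category of Hilbert `A`-modules: for all Hilbert
`A`-modules `K`, `L` and every nonzero bounded `A`-module map `R : K → L` there is a
bounded `A`-module map `V : L → H` with `V ∘ R ≠ 0`. -/
def IsCogenerator {H : Type} [NormedAddCommGroup H] [InnerProductSpace ℂ H] [CompleteSpace H]
    (πH : A →ₙₐ[ℂ] (H →L[ℂ] H)) : Prop :=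
  ∀ (K L : Type) [NormedAddCommGroup K] [InnerProductSpace ℂ K] [CompleteSpace K]
    [NormedAddCommGroup L] [InnerProductSpace ℂ L] [CompleteSpace L],
    ∀ (πK : A →ₙₐ[ℂ] (K →L[ℂ] K)) (πL : A →ₙₐ[ℂ] (L →L[ℂ] L)),
      IsHilbertRep A πK → IsHilbertRep A πL →
      ∀ R : K →L[ℂ] L, IsModuleMap A πK πL R → R ≠ 0 →
        ∃ V : L →L[ℂ] H, IsModuleMap A πL πH V ∧ V.comp R ≠ 0

/-- The algebra of upper triangular `2 × 2` complex matrices, normed as operators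
on the Euclidean space `ℂ²` (the `L²` operator norm). -/
def T2 : Subalgebra ℂ (Matrix (Fin 2) (Fin 2) ℂ) where
  carrier := {M | M 1 0 = 0}
  mul_mem' := by
    intro a b ha hb
    simp only [Set.mem_setOf_eq] at *
    simp [Matrix.mul_apply, Fin.sum_univ_two, ha, hb]
  add_mem' := by
    intro a b ha hb
    simp only [Set.mem_setOf_eq] at *
    simp [ha, hb]
  algebraMap_mem' := by
    intro c
    simp [Matrix.algebraMap_eq_diagonal]

/-- The operator `(ζ, η) ↦ (a • ζ + b • (T η), c • η)` on `H₁ × H₂`. -/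
def blockOp {H₁ H₂ : Type} [NormedAddCommGroup H₁] [InnerProductSpace ℂ H₁]
    [NormedAddCommGroup H₂] [InnerProductSpace ℂ H₂]
    (T : H₂ →L[ℂ] H₁) (a b c : ℂ) : (H₁ × H₂) →L[ℂ] (H₁ × H₂) :=
  (a • ContinuousLinearMap.fst ℂ H₁ H₂ +
    b • T.comp (ContinuousLinearMap.snd ℂ H₁ H₂)).prod
    (c • ContinuousLinearMap.snd ℂ H₁ H₂)

variable {H₁ H₂ : Type} [NormedAddCommGroup H₁] [InnerProductSpace ℂ H₁]
  [NormedAddCommGroup H₂] [InnerProductSpace ℂ H₂]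

theorem blockOp_apply (T : H₂ →L[ℂ] H₁) (a b c : ℂ) (x : H₁ × H₂) :
    blockOp T a b c x = (a • x.1 + b • T x.2, c • x.2) := rfl

theorem blockOp_mul (T : H₂ →L[ℂ] H₁) (a b c a' b' c' : ℂ) :
    (blockOp T a b c).comp (blockOp T a' b' c') =
      blockOp T (a * a') (a * b' + b * c') (c * c') := by
  refine ContinuousLinearMap.ext fun x => Prod.ext ?_ ?_
  · simp [blockOp_apply, smul_smul, smul_add, add_smul]
    abel
  · simp [blockOp_apply, smul_smul]

theorem blockOp_add (T : H₂ →L[ℂ] H₁) (a b c a' b' c' : ℂ) :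
    blockOp T (a + a') (b + b') (c + c') = blockOp T a b c + blockOp T a' b' c' := by
  refine ContinuousLinearMap.ext fun x => Prod.ext ?_ ?_
  · simp [blockOp_apply, add_smul]
    abel
  · simp [blockOp_apply, add_smul]

theorem blockOp_smul (T : H₂ →L[ℂ] H₁) (s a b c : ℂ) :
    blockOp T (s * a) (s * b) (s * c) = s • blockOp T a b c := by
  refine ContinuousLinearMap.ext fun x => Prod.ext ?_ ?_
  · simp [blockOp_apply, smul_smul, smul_add]
  · simp [blockOp_apply, smul_smul]

theorem blockOp_zero (T : H₂ →L[ℂ] H₁) : blockOp T 0 0 0 = 0 := by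
  refine ContinuousLinearMap.ext fun x => Prod.ext ?_ ?_ <;> simp [blockOp_apply]

/-- Conjugation of an operator on `H₁ × H₂` to the `L²`-direct sum `WithLp 2 (H₁ × H₂)`. -/
def prodL2Conj (X : (H₁ × H₂) →L[ℂ] (H₁ × H₂)) :
    WithLp 2 (H₁ × H₂) →L[ℂ] WithLp 2 (H₁ × H₂) :=
  ((WithLp.prodContinuousLinearEquiv 2 ℂ H₁ H₂).symm.toContinuousLinearMap.comp X).comp
    (WithLp.prodContinuousLinearEquiv 2 ℂ H₁ H₂).toContinuousLinearMap

theorem prodL2Conj_add (X Y : (H₁ × H₂) →L[ℂ] (H₁ × H₂)) :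
    prodL2Conj (X + Y) = prodL2Conj X + prodL2Conj Y := by
  unfold prodL2Conj
  rw [ContinuousLinearMap.comp_add, ContinuousLinearMap.add_comp]

theorem prodL2Conj_smul (s : ℂ) (X : (H₁ × H₂) →L[ℂ] (H₁ × H₂)) :
    prodL2Conj (s • X) = s • prodL2Conj X := by
  unfold prodL2Conj
  rw [ContinuousLinearMap.comp_smul, ContinuousLinearMap.smul_comp]

theorem prodL2Conj_zero : prodL2Conj (0 : (H₁ × H₂) →L[ℂ] (H₁ × H₂)) = 0 := by
  unfold prodL2Conj
  rw [ContinuousLinearMap.comp_zero, ContinuousLinearMap.zero_comp]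

theorem prodL2Conj_mul (X Y : (H₁ × H₂) →L[ℂ] (H₁ × H₂)) :
    prodL2Conj X * prodL2Conj Y = prodL2Conj (X.comp Y) := by
  ext x <;> simp [prodL2Conj, ContinuousLinearMap.mul_apply]

/-- The representation `π_{(H₁,H₂,T)}` of `T2` on the Hilbert space direct sum `H₁ ⊕ H₂`
determined by a contraction `T : H₂ → H₁`: the upper triangular matrix `[[a, b], [0, c]]`
acts by `(ζ, η) ↦ (a ζ + b (T η), c η)`. -/
def triRep (T : H₂ →L[ℂ] H₁) :
    ↥T2 →ₙₐ[ℂ] (WithLp 2 (H₁ × H₂) →L[ℂ] WithLp 2 (H₁ × H₂)) where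
  toFun M := prodL2Conj (blockOp T ((M : Matrix (Fin 2) (Fin 2) ℂ) 0 0)
    ((M : Matrix (Fin 2) (Fin 2) ℂ) 0 1) ((M : Matrix (Fin 2) (Fin 2) ℂ) 1 1))
  map_add' M N := by
    have h : ((M + N : ↥T2) : Matrix (Fin 2) (Fin 2) ℂ)
        = (M : Matrix (Fin 2) (Fin 2) ℂ) + (N : Matrix (Fin 2) (Fin 2) ℂ) := rfl
    simp only [h, Matrix.add_apply, blockOp_add, prodL2Conj_add]
  map_smul' s M := by
    have h : ((s • M : ↥T2) : Matrix (Fin 2) (Fin 2) ℂ)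
        = s • (M : Matrix (Fin 2) (Fin 2) ℂ) := rfl
    simp only [h, Matrix.smul_apply, smul_eq_mul, blockOp_smul, prodL2Conj_smul,
      RingHom.id_apply, MonoidHom.id_apply]
  map_zero' := by
    have h : ((0 : ↥T2) : Matrix (Fin 2) (Fin 2) ℂ) = 0 := rfl
    simp only [h, Matrix.zero_apply, blockOp_zero, prodL2Conj_zero]
  map_mul' M N := by
    have hM : (M : Matrix (Fin 2) (Fin 2) ℂ) 1 0 = 0 := M.2
    have hN : (N : Matrix (Fin 2) (Fin 2) ℂ) 1 0 = 0 := N.2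
    have hMN : ((M * N : ↥T2) : Matrix (Fin 2) (Fin 2) ℂ)
        = (M : Matrix (Fin 2) (Fin 2) ℂ) * (N : Matrix (Fin 2) (Fin 2) ℂ) := rfl
    have e00 : ((M * N : ↥T2) : Matrix (Fin 2) (Fin 2) ℂ) 0 0
        = (M : Matrix (Fin 2) (Fin 2) ℂ) 0 0 * (N : Matrix (Fin 2) (Fin 2) ℂ) 0 0 := by
      simp [hMN, Matrix.mul_apply, Fin.sum_univ_two, hN]
    have e01 : ((M * N : ↥T2) : Matrix (Fin 2) (Fin 2) ℂ) 0 1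
        = (M : Matrix (Fin 2) (Fin 2) ℂ) 0 0 * (N : Matrix (Fin 2) (Fin 2) ℂ) 0 1
          + (M : Matrix (Fin 2) (Fin 2) ℂ) 0 1 * (N : Matrix (Fin 2) (Fin 2) ℂ) 1 1 := by
      simp [hMN, Matrix.mul_apply, Fin.sum_univ_two]
    have e11 : ((M * N : ↥T2) : Matrix (Fin 2) (Fin 2) ℂ) 1 1
        = (M : Matrix (Fin 2) (Fin 2) ℂ) 1 1 * (N : Matrix (Fin 2) (Fin 2) ℂ) 1 1 := by
      simp [hMN, Matrix.mul_apply, Fin.sum_univ_two, hM]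
    simp only [e00, e01, e11, ← blockOp_mul, ← prodL2Conj_mul]

/-!
Everything is read off from the matrix units `e11, e12, e22` of `T2`.

Necessity. On `ℂ` with the character `M ↦ M₂₂`, a module map into `H₁ ⊕ H₂` is fixed by `e22`
and killed by `e12`, so it takes values in `0 ⊕ ker T`; if `T` is injective it vanishes, and the
identity of that module is not detected. If `T = 0`, then `e12` acts by zero on `H₁ ⊕ H₂`, so every
module map from `ℂ²` kills `e₁ = e12 • e₂`, and the inclusion of the character `M ↦ M₁₁` as
`ℂ e₁ ⊆ ℂ²` is not detected.

Sufficiency. Let `w ≠ 0` in a Hilbert `T2`-module `L`, on which `e11 + e22 = 1` acts as the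
identity. If `e22 w ≠ 0`, then `z ↦ (0, ⟪e22 w, e22 z⟫ k)` with `0 ≠ k ∈ ker T` is a module map not
vanishing at `w`. Otherwise `w = e11 w`, and `z ↦ (⟪w, e11 z⟫ T ξ, ⟪w, e12 z⟫ ξ)` with `T ξ ≠ 0`
works.
-/

open WithLp

section HilbertRep

variable {B K : Type} [NormedRing B] [NormedSpace ℂ B]
  [NormedAddCommGroup K] [InnerProductSpace ℂ K] [CompleteSpace K] {π : B →ₙₐ[ℂ] (K →L[ℂ] K)}

theorem IsHilbertRep.map_one (h : IsHilbertRep B π) : π 1 = 1 := by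
  have hfix : ∀ x ∈ Submodule.span ℂ {x : K | ∃ (a : B) (y : K), π a y = x}, π 1 x = x := by
    intro x hx
    induction hx using Submodule.span_induction with
    | mem x hx =>
      obtain ⟨a, y, rfl⟩ := hx
      rw [← mul_apply_eq_comp, ← map_mul, one_mul]
    | zero => exact map_zero _
    | add x y _ _ hx hy => rw [map_add, hx, hy]
    | smul c x _ hx => rw [map_smul, hx]
  ext x
  exact congrFun (Continuous.ext_on h.2 (π 1).continuous continuous_id hfix) x

theorem isHilbertRep_of_map_one (hπ : ∀ a, ‖π a‖ ≤ ‖a‖) (h1 : π 1 = 1) : IsHilbertRep B π := by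
  refine ⟨hπ, ?_⟩
  convert dense_univ
  refine Set.eq_univ_of_forall fun x => Submodule.subset_span ⟨1, x, ?_⟩
  rw [h1, one_apply_eq_self]

end HilbertRep

theorem Matrix.norm_entry_le_l2_opNorm {𝕜 m n : Type} [RCLike 𝕜] [Fintype m] [Fintype n]
    [DecidableEq n] (A : Matrix m n 𝕜) (i : m) (j : n) : ‖A i j‖ ≤ ‖A‖ := by
  set e := EuclideanSpace.single j (1 : 𝕜)
  calc ‖A i j‖ = ‖(EuclideanSpace.equiv m 𝕜).symm (A.mulVec e) i‖ := by
        simp [e, Matrix.mulVec_single]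
    _ ≤ ‖(EuclideanSpace.equiv m 𝕜).symm (A.mulVec e)‖ := PiLp.norm_apply_le _ i
    _ ≤ ‖A‖ * ‖e‖ := A.l2_opNorm_mulVec e
    _ = ‖A‖ := by simp [e]

namespace T2

theorem apply_one_zero (M : ↥T2) : (M : Matrix (Fin 2) (Fin 2) ℂ) 1 0 = 0 := M.2

theorem mul_apply_diag (M N : ↥T2) (i : Fin 2) :
    ((M * N : ↥T2) : Matrix (Fin 2) (Fin 2) ℂ) i i =
      (M : Matrix (Fin 2) (Fin 2) ℂ) i i * (N : Matrix (Fin 2) (Fin 2) ℂ) i i := by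
  fin_cases i <;> simp [Matrix.mul_apply, Fin.sum_univ_two, apply_one_zero]

def diagEntry (i : Fin 2) : ↥T2 →ₐ[ℂ] ℂ where
  toFun M := (M : Matrix (Fin 2) (Fin 2) ℂ) i i
  map_one' := by fin_cases i <;> rfl
  map_mul' M N := mul_apply_diag M N i
  map_zero' := rfl
  map_add' _ _ := rfl
  commutes' c := by fin_cases i <;> simp [Matrix.algebraMap_eq_diagonal]

-- Named 1-indexed like the paper's matrix units, whereas `Fin 2` entries are 0-indexed.
def e11 : ↥T2 := ⟨!![1, 0; 0, 0], rfl⟩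
def e12 : ↥T2 := ⟨!![0, 1; 0, 0], rfl⟩
def e22 : ↥T2 := ⟨!![0, 0; 0, 1], rfl⟩

theorem e11_add_e22 : e11 + e22 = 1 := by
  ext i j
  fin_cases i <;> fin_cases j <;> simp [e11, e22]

theorem e11_mul (M : ↥T2) : e11 * M =
    (M : Matrix (Fin 2) (Fin 2) ℂ) 0 0 • e11 + (M : Matrix (Fin 2) (Fin 2) ℂ) 0 1 • e12 := by
  ext i j
  fin_cases i <;> fin_cases j <;>
    simp [e11, e12, Matrix.mul_apply, Fin.sum_univ_two, apply_one_zero]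

theorem e12_mul (M : ↥T2) : e12 * M = (M : Matrix (Fin 2) (Fin 2) ℂ) 1 1 • e12 := by
  ext i j
  fin_cases i <;> fin_cases j <;> simp [e12, Matrix.mul_apply, Fin.sum_univ_two, apply_one_zero]

theorem e22_mul (M : ↥T2) : e22 * M = (M : Matrix (Fin 2) (Fin 2) ℂ) 1 1 • e22 := by
  ext i j
  fin_cases i <;> fin_cases j <;> simp [e22, Matrix.mul_apply, Fin.sum_univ_two, apply_one_zero]

end T2

def charRep (i : Fin 2) : ↥T2 →ₙₐ[ℂ] (ℂ →L[ℂ] ℂ) :=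
  ((Algebra.ofId ℂ (ℂ →L[ℂ] ℂ)).comp (T2.diagEntry i)).toNonUnitalAlgHom

theorem charRep_apply (i : Fin 2) (M : ↥T2) (u : ℂ) :
    charRep i M u = (M : Matrix (Fin 2) (Fin 2) ℂ) i i * u := rfl

theorem isHilbertRep_charRep (i : Fin 2) : IsHilbertRep ↥T2 (charRep i) := by
  refine isHilbertRep_of_map_one (fun M => ?_) ?_
  · refine ContinuousLinearMap.opNorm_le_bound _ (norm_nonneg M) fun u => ?_
    rw [charRep_apply, norm_mul]
    gcongr
    exact Matrix.norm_entry_le_l2_opNorm _ i i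
  · exact map_one ((Algebra.ofId ℂ (ℂ →L[ℂ] ℂ)).comp (T2.diagEntry i))

def stdRep : ↥T2 →ₙₐ[ℂ] (EuclideanSpace ℂ (Fin 2) →L[ℂ] EuclideanSpace ℂ (Fin 2)) :=
  ((Matrix.toEuclideanCLM (n := Fin 2) (𝕜 := ℂ)).toAlgEquiv.toAlgHom.comp T2.val).toNonUnitalAlgHom

theorem stdRep_apply (M : ↥T2) (v : EuclideanSpace ℂ (Fin 2)) :
    stdRep M v = Matrix.toEuclideanCLM (n := Fin 2) (𝕜 := ℂ) M v := rfl

theorem isHilbertRep_stdRep : IsHilbertRep ↥T2 stdRep :=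
  isHilbertRep_of_map_one (fun M => (Matrix.cstar_norm_def (M : Matrix (Fin 2) (Fin 2) ℂ)).ge)
    (map_one ((Matrix.toEuclideanCLM (n := Fin 2) (𝕜 := ℂ)).toAlgEquiv.toAlgHom.comp T2.val))

theorem stdRep_single_zero (M : ↥T2) :
    stdRep M (EuclideanSpace.single 0 1) =
      (M : Matrix (Fin 2) (Fin 2) ℂ) 0 0 • EuclideanSpace.single 0 1 := by
  ext i
  fin_cases i <;> simp [stdRep_apply, Matrix.mulVec_single, T2.apply_one_zero]

theorem stdRep_e12_single_one :
    stdRep T2.e12 (EuclideanSpace.single 1 1) = EuclideanSpace.single 0 1 := by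
  ext i
  fin_cases i <;> simp [stdRep_apply, Matrix.mulVec_single, T2.e12]

section TriRep

variable (T : H₂ →L[ℂ] H₁)

theorem triRep_apply (M : ↥T2) (x : WithLp 2 (H₁ × H₂)) :
    triRep T M x = toLp 2 ((M : Matrix (Fin 2) (Fin 2) ℂ) 0 0 • x.fst +
      (M : Matrix (Fin 2) (Fin 2) ℂ) 0 1 • T x.snd, (M : Matrix (Fin 2) (Fin 2) ℂ) 1 1 • x.snd) :=
  rfl

theorem triRep_e12_apply (x : WithLp 2 (H₁ × H₂)) : triRep T T2.e12 x = toLp 2 (T x.snd, 0) := by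
  simp [triRep_apply, T2.e12]

theorem triRep_e22_apply (x : WithLp 2 (H₁ × H₂)) : triRep T T2.e22 x = toLp 2 (0, x.snd) := by
  simp [triRep_apply, T2.e22]

variable {T}

theorem IsModuleMap.eq_zero_of_charRep_one {V : ℂ →L[ℂ] WithLp 2 (H₁ × H₂)}
    (hV : IsModuleMap ↥T2 (charRep 1) (triRep T) V) (hT : Function.Injective T) : V = 0 := by
  refine ContinuousLinearMap.ext fun u => ?_
  have h22 : V u = toLp 2 (0, (V u).snd) := by
    rw [← triRep_e22_apply, ← hV, charRep_apply]
    simp [T2.e22]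
  have h12 : toLp 2 (T (V u).snd, 0) = (0 : WithLp 2 (H₁ × H₂)) := by
    rw [← triRep_e12_apply, ← hV, charRep_apply]
    simp [T2.e12]
  have hsnd : (V u).snd = 0 := hT (by simpa using congrArg WithLp.fst h12)
  rw [h22, hsnd]
  rfl

theorem not_isCogenerator_triRep_of_injective [CompleteSpace H₁] [CompleteSpace H₂]
    (hT : Function.Injective T) : ¬IsCogenerator ↥T2 (triRep T) := by
  intro hcog
  obtain ⟨V, hV, hVR⟩ := hcog ℂ ℂ (charRep 1) (charRep 1) (isHilbertRep_charRep 1)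
    (isHilbertRep_charRep 1) 1 (fun _ _ => rfl) one_ne_zero
  exact hVR (by rw [hV.eq_zero_of_charRep_one hT, ContinuousLinearMap.zero_comp])

theorem IsModuleMap.map_single_zero_of_stdRep
    {V : EuclideanSpace ℂ (Fin 2) →L[ℂ] WithLp 2 (H₁ × H₂)}
    (hV : IsModuleMap ↥T2 stdRep (triRep (0 : H₂ →L[ℂ] H₁)) V) :
    V (EuclideanSpace.single 0 1) = 0 := by
  rw [← stdRep_e12_single_one, hV, triRep_e12_apply, zero_apply]
  rfl

theorem not_isCogenerator_triRep_zero [CompleteSpace H₁] [CompleteSpace H₂] :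
    ¬IsCogenerator ↥T2 (triRep (0 : H₂ →L[ℂ] H₁)) := by
  intro hcog
  set R := ContinuousLinearMap.toSpanSingleton ℂ (EuclideanSpace.single (0 : Fin 2) (1 : ℂ))
  have hR : IsModuleMap ↥T2 (charRep 0) stdRep R := fun M u => by
    simp [R, charRep_apply, stdRep_single_zero, mul_smul, smul_comm u]
  have hR0 : R ≠ 0 := fun h => by simpa [R] using congrArg (fun f => f 1) h
  obtain ⟨V, hV, hVR⟩ := hcog ℂ _ (charRep 0) stdRep (isHilbertRep_charRep 0) isHilbertRep_stdRep
    R hR hR0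
  refine hVR (ContinuousLinearMap.ext fun u => ?_)
  simp [R, hV.map_single_zero_of_stdRep]

end TriRep

section Probes

variable {L : Type} [NormedAddCommGroup L] [InnerProductSpace ℂ L] (π : ↥T2 →ₙₐ[ℂ] (L →L[ℂ] L))

theorem map_apply_map_apply (a b : ↥T2) (z : L) : π a (π b z) = π (a * b) z := by
  rw [map_mul, mul_apply_eq_comp]

def kerProbe (x : L) (k : H₂) : L →L[ℂ] WithLp 2 (H₁ × H₂) :=
  (WithLp.prodContinuousLinearEquiv 2 ℂ H₁ H₂).symm.toContinuousLinearMap.comp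
    ((0 : L →L[ℂ] H₁).prod (((innerSL ℂ x).comp (π T2.e22)).smulRight k))

theorem kerProbe_apply (x : L) (k : H₂) (z : L) :
    kerProbe π x k z = toLp 2 ((0 : H₁), inner ℂ x (π T2.e22 z) • k) := rfl

def rangeProbe (T : H₂ →L[ℂ] H₁) (x : L) (ξ : H₂) : L →L[ℂ] WithLp 2 (H₁ × H₂) :=
  (WithLp.prodContinuousLinearEquiv 2 ℂ H₁ H₂).symm.toContinuousLinearMap.comp
    ((((innerSL ℂ x).comp (π T2.e11)).smulRight (T ξ)).prod
      (((innerSL ℂ x).comp (π T2.e12)).smulRight ξ))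

theorem rangeProbe_apply (T : H₂ →L[ℂ] H₁) (x : L) (ξ : H₂) (z : L) :
    rangeProbe π T x ξ z =
      toLp 2 (inner ℂ x (π T2.e11 z) • T ξ, inner ℂ x (π T2.e12 z) • ξ) := rfl

variable {π} {T : H₂ →L[ℂ] H₁}

theorem isModuleMap_kerProbe (x : L) {k : H₂} (hk : T k = 0) :
    IsModuleMap ↥T2 π (triRep T) (kerProbe π x k) := by
  intro M z
  simp [kerProbe_apply, triRep_apply, map_apply_map_apply, T2.e22_mul, hk, mul_smul]

theorem isModuleMap_rangeProbe (x : L) (ξ : H₂) :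
    IsModuleMap ↥T2 π (triRep T) (rangeProbe π T x ξ) := by
  intro M z
  simp [rangeProbe_apply, triRep_apply, map_apply_map_apply, T2.e11_mul, T2.e12_mul, add_smul,
    mul_smul]

theorem exists_isModuleMap_triRep_apply_ne_zero (hπ : π 1 = 1)
    (hker : ¬Function.Injective T) (hT : T ≠ 0) {w : L} (hw : w ≠ 0) :
    ∃ V : L →L[ℂ] WithLp 2 (H₁ × H₂), IsModuleMap ↥T2 π (triRep T) V ∧ V w ≠ 0 := by
  by_cases hQ : π T2.e22 w = 0
  · obtain ⟨ξ, hξ⟩ : ∃ ξ, T ξ ≠ 0 := by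
      by_contra! h
      exact hT (ContinuousLinearMap.ext h)
    have hP : π T2.e11 w = w := by
      rw [← add_zero (π T2.e11 w), ← hQ, ← add_apply, ← map_add,
        T2.e11_add_e22, hπ, one_apply_eq_self]
    refine ⟨rangeProbe π T w ξ, isModuleMap_rangeProbe w ξ, fun h => ?_⟩
    have := congrArg WithLp.fst h
    simp [rangeProbe_apply, hP, hw, hξ] at this
  · obtain ⟨k, hk, hk0⟩ : ∃ k, T k = 0 ∧ k ≠ 0 := by
      simpa [injective_iff_map_eq_zero] using hker
    refine ⟨kerProbe π (π T2.e22 w) k, isModuleMap_kerProbe _ hk, fun h => ?_⟩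
    have := congrArg WithLp.snd h
    simp [kerProbe_apply, hQ, hk0] at this

end Probes

theorem isCogenerator_triRep [CompleteSpace H₁] [CompleteSpace H₂] {T : H₂ →L[ℂ] H₁}
    (hker : ¬Function.Injective T) (hT : T ≠ 0) : IsCogenerator ↥T2 (triRep T) := by
  intro K L _ _ _ _ _ _ πK πL _ hL R _ hR
  obtain ⟨y, hy⟩ : ∃ y, R y ≠ 0 := by
    by_contra! h
    exact hR (ContinuousLinearMap.ext h)
  obtain ⟨V, hV, hVy⟩ := exists_isModuleMap_triRep_apply_ne_zero hL.map_one hker hT hy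
  exact ⟨V, hV, fun h => hVy (by rw [← ContinuousLinearMap.comp_apply, h, zero_apply])⟩

theorem triRep_cogenerator_iff_general [CompleteSpace H₁] [CompleteSpace H₂]
    (T : H₂ →L[ℂ] H₁) :
    IsCogenerator ↥T2 (triRep T) ↔ (¬Function.Injective ⇑T ∧ T ≠ 0) := by
  refine ⟨fun hcog => ⟨fun hinj => not_isCogenerator_triRep_of_injective hinj hcog, ?_⟩,
    fun h => isCogenerator_triRep h.1 h.2⟩
  rintro rfl
  exact not_isCogenerator_triRep_zero hcog

/-- The Hilbert `T2`-module `H₁ ⊕ H₂` given by `π_(H₁,H₂,T)` is a cogenerator if and only if `T` is not injective and `T ≠ 0`. -/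
theorem triRep_cogenerator_iff [CompleteSpace H₁] [CompleteSpace H₂]
    [Nontrivial H₁] [Nontrivial H₂]
    (T : H₂ →L[ℂ] H₁) (hT : ‖T‖ ≤ 1) :
    IsCogenerator ↥T2 (triRep T) ↔ (¬Function.Injective ⇑T ∧ T ≠ 0) :=
  triRep_cogenerator_iff_general T
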